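/- Let A be a self-adjoint operator in a complex Hilbert space H and let g ∈ C∞(A) be of the bounded class with respect to A, i.e. there exists B > 0 with ‖A^n g‖ ≤ B^n for all n ∈ ℕ. Then the Krylov intersection is trivial, I(A,g) = {0}. Moreover, if g ∈ ran A, then there exists f ∈ K̄(A,g)^V with Af = g. -/

import Mathlib

open Filter Topology MeasureTheory TopologicalSpace

noncomputable section

namespace KrylovPaper

variable {H : Type*} [NormedAddCommGroup H] [InnerProductSpace ℂ H] [CompleteSpace H]

/-- `u` is the orbit of `g` under the (unbounded) operator `A`, i.e. `u n = Aⁿ g`,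
with every iterate in the domain.  `g ∈ C^∞(A)` is expressed as the existence of such a `u`. -/
def IsOrbit (A : H →ₗ.[ℂ] H) (g : H) (u : ℕ → H) : Prop :=
  u 0 = g ∧ ∀ n, ∃ h : u n ∈ A.domain, A ⟨u n, h⟩ = u (n + 1)

/-- The Krylov subspace `K(A,g) = span {Aᵏ g : k ∈ ℕ₀}`, expressed via the orbit `u`. -/
def krylov (u : ℕ → H) : Set H :=
  (Submodule.span ℂ (Set.range u) : Set H)

/-- The graph norm `‖x‖_A` of an element `x ∈ D(A)`. -/
def gnorm (A : H →ₗ.[ℂ] H) {x : H} (hx : x ∈ A.domain) : ℝ :=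
  Real.sqrt (‖x‖ ^ 2 + ‖A ⟨x, hx⟩‖ ^ 2)

/-- Graph-norm closure `K̄^V` of a set `K`: the elements `x ∈ D(A)` approximable in
graph norm by sequences from `K`. -/
def graphClosure (A : H →ₗ.[ℂ] H) (K : Set H) : Set H :=
  {x | ∃ hx : x ∈ A.domain, ∃ p : ℕ → H, (∀ k, p k ∈ K) ∧
    ∃ hp : ∀ k, p k ∈ A.domain,
      Tendsto (fun k => gnorm A (A.domain.sub_mem (hp k) hx)) atTop (𝓝 0)}

/-- The graph-inner-product orthogonal complement `K^{⊥_V}` of a set `K ⊆ D(A)`. -/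
def perpV (A : H →ₗ.[ℂ] H) (K : Set H) : Set H :=
  {x | ∃ hx : x ∈ A.domain, ∀ y, y ∈ K → ∀ hy : y ∈ A.domain,
    (inner ℂ x y : ℂ) + (inner ℂ (A ⟨x, hx⟩) (A ⟨y, hy⟩) : ℂ) = 0}

/-- The image `A(S)` of a subset `S` of the domain of `A`. -/
def opImage (A : H →ₗ.[ℂ] H) (S : Set H) : Set H :=
  {w | ∃ x, ∃ hx : x ∈ A.domain, x ∈ S ∧ A ⟨x, hx⟩ = w}

/-- The Krylov intersection `I(A,g) = K̄(A,g) ∩ A(K(A,g)^{⊥_V})`. -/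
def krylovIntersection (A : H →ₗ.[ℂ] H) (u : ℕ → H) : Set H :=
  closure (krylov u) ∩ opImage A (perpV A (krylov u))

/-- `μ` is a representing measure for the Hamburger moment problem of `(A,g)`,
where `u n = Aⁿ g`: each monomial is `μ`-integrable and `∫ λⁿ dμ = ⟨Aⁿ g, g⟩`. -/
def IsMomentMeasure (g : H) (u : ℕ → H) (μ : Measure ℝ) : Prop :=
  ∀ n : ℕ, Integrable (fun x : ℝ => x ^ n) μ ∧
    (inner ℂ (u n) g : ℂ) = ((∫ x : ℝ, x ^ n ∂μ : ℝ) : ℂ)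

/-- Determinacy of the Hamburger moment problem associated with `(A,g)`:
there is at most one finite positive Borel measure with the prescribed moments. -/
def IsDeterminate (g : H) (u : ℕ → H) : Prop :=
  ∀ μ ν : Measure ℝ, IsFiniteMeasure μ → IsFiniteMeasure ν →
    IsMomentMeasure g u μ → IsMomentMeasure g u ν → μ = ν

/-- `g` is of the bounded class with respect to `A`. -/
def IsBoundedVector (A : H →ₗ.[ℂ] H) (g : H) : Prop :=
  ∃ u, IsOrbit A g u ∧ ∃ B : ℝ, 0 < B ∧ ∀ n : ℕ, 1 ≤ n → ‖u n‖ ≤ B ^ n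

/-- The weak "norm" induced by a dense sequence `v` of the closed unit ball. -/
def wnorm (v : ℕ → H) (x : H) : ℝ :=
  ∑' n : ℕ, (2 : ℝ)⁻¹ ^ (n + 1) * ‖(inner ℂ (v n) x : ℂ)‖

/-- One-sided weak gap `d_w(C,D)`. -/
def dw (v : ℕ → H) (C D : Set H) : ℝ :=
  ⨆ u : C, ⨅ w : D, wnorm v ((u : H) - (w : H))

/-- The weak-gap metric `d̂_w(C,D)`. -/
def dhat (v : ℕ → H) (C D : Set H) : ℝ :=
  max (dw v C D) (dw v D C)

/-- The weak-gap metric between (closed) subspaces: weak gap of their unit balls. -/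
def dhatSub (v : ℕ → H) (M N : Submodule ℂ H) : ℝ :=
  dhat v ((M : Set H) ∩ Metric.closedBall 0 1) ((N : Set H) ∩ Metric.closedBall 0 1)

/-- A set is weakly closed if it is closed in the weak topology of `H`. -/
def WeaklyClosed (C : Set H) : Prop :=
  IsClosed (⇑(toWeakSpace ℂ H) '' C)
-- auxiliary
section Aux
set_option linter.unusedSectionVars false
variable {H : Type*} [NormedAddCommGroup H] [InnerProductSpace ℂ H] [CompleteSpace H]

lemma symm_of_sa (A : H →ₗ.[ℂ] H) (hsa : IsSelfAdjoint A) :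
    ∀ x y : A.domain, (inner ℂ (A x) (y : H) : ℂ) = inner ℂ (x : H) (A y) := by
  have hd : Dense (A.domain : Set H) := hsa.dense_domain
  have heq : A.adjoint = A := hsa
  have h := LinearPMap.adjoint_isFormalAdjoint hd
  rw [heq] at h
  exact h

lemma graph_closed_of_sa (A : H →ₗ.[ℂ] H) (hsa : IsSelfAdjoint A) :
    IsClosed (A.graph : Set (H × H)) := by
  have hd : Dense (A.domain : Set H) := hsa.dense_domain
  have heq : A.adjoint = A := hsa
  have hsymm := symm_of_sa A hsa
  have hset : (A.graph : Set (H × H)) =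
      ⋂ x : A.domain, {p : H × H | (inner ℂ (A x) p.1 : ℂ) = inner ℂ (x : H) p.2} := by
    apply Set.Subset.antisymm
    · rintro ⟨y, z⟩ hyz
      rw [SetLike.mem_coe, LinearPMap.mem_graph_iff] at hyz
      obtain ⟨w, hw1, hw2⟩ := hyz
      simp only [Set.mem_iInter, Set.mem_setOf_eq]
      intro x
      simp only [] at hw1 hw2
      rw [← hw1, ← hw2]
      exact hsymm x w
    · rintro ⟨y, z⟩ hyz
      simp only [Set.mem_iInter, Set.mem_setOf_eq] at hyz
      have hy : y ∈ A.adjoint.domain := by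
        apply LinearPMap.mem_adjoint_domain_of_exists
        exact ⟨z, fun x => by
          rw [← inner_conj_symm, ← (hyz x), inner_conj_symm]⟩
      have hz : A.adjoint ⟨y, hy⟩ = z := by
        apply LinearPMap.adjoint_apply_eq hd
        intro x
        rw [← inner_conj_symm, ← (hyz x), inner_conj_symm]
      have : ((y : H), A.adjoint ⟨y, hy⟩) ∈ A.adjoint.graph := LinearPMap.mem_graph _ ⟨y, hy⟩
      rw [hz, heq] at this
      exact this
  rw [hset]
  exact isClosed_iInter fun x => isClosed_eq
    (((innerSL ℂ (A x)).continuous).comp continuous_fst)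
    (((innerSL ℂ (x : H)).continuous).comp continuous_snd)

lemma key_bound (A : H →ₗ.[ℂ] H)
    (hsymm : ∀ x y : A.domain, (inner ℂ (A x) (y : H) : ℂ) = inner ℂ (x : H) (A y))
    (u : ℕ → H) (hdom : ∀ n, u n ∈ A.domain)
    (hstep : ∀ n (hn : u n ∈ A.domain), A ⟨u n, hn⟩ = u (n + 1))
    (B : ℝ) (hB : 0 < B) (hbdd : ∀ n : ℕ, 1 ≤ n → ‖u n‖ ≤ B ^ n) :
    ∀ h ∈ Submodule.span ℂ (Set.range u), ∃ hd : h ∈ A.domain,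
      A ⟨h, hd⟩ ∈ Submodule.span ℂ (Set.range u) ∧ ‖A ⟨h, hd⟩‖ ≤ B * ‖h‖ := by
  intro h hh
  rw [Finsupp.mem_span_range_iff_exists_finsupp] at hh
  obtain ⟨c, hc⟩ := hh
  rw [Finsupp.sum] at hc
  set vv : ℕ → A.domain := fun n => ⟨u n, hdom n⟩ with hvv
  set S : ℕ → A.domain := fun m => ∑ i ∈ c.support, c i • vv (i + m) with hS
  have hScoe : ∀ m, ((S m : H)) = ∑ i ∈ c.support, c i • u (i + m) := by
    intro m
    simp [hS, hvv]
  have hS0 : ((S 0 : H)) = h := by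
    rw [hScoe]; simpa using hc
  have hSd : ∀ m, A (S m) = ((S (m + 1) : H)) := by
    intro m
    have e1 : A (S m) = ∑ i ∈ c.support, c i • (A (vv (i + m)) : H) := by
      show A.toFun (S m) = ∑ i ∈ c.support, c i • (A.toFun (vv (i + m)) : H)
      rw [hS, map_sum]
      simp only [_root_.map_smul]
    rw [e1, hScoe]
    exact Finset.sum_congr rfl fun i _ =>
      congrArg (fun z => c i • z) (hstep (i + m) (hdom (i + m)))
  set a : ℕ → ℝ := fun m => ‖(S m : H)‖ with ha
  have ha0 : ∀ m, 0 ≤ a m := fun m => norm_nonneg _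
  have loggap : ∀ m, a (m + 1) ^ 2 ≤ a m * a (m + 2) := by
    intro m
    have h1 : (inner ℂ ((S (m+1) : H)) ((S (m+1) : H)) : ℂ)
        = inner ℂ ((S m : H)) ((S (m+2) : H)) := by
      calc (inner ℂ ((S (m+1) : H)) ((S (m+1) : H)) : ℂ)
          = inner ℂ (A (S m)) ((S (m+1) : H)) := by rw [hSd m]
        _ = inner ℂ ((S m : H)) (A (S (m+1))) := hsymm _ _
        _ = inner ℂ ((S m : H)) ((S (m+2) : H)) := by rw [hSd (m+1)]
    have h2 : (a (m+1))^2 = RCLike.re (inner ℂ ((S m : H)) ((S (m+2)) : H) : ℂ) := by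
      rw [← h1]
      exact (inner_self_eq_norm_sq _).symm
    calc (a (m+1))^2 = RCLike.re (inner ℂ ((S m : H)) ((S (m+2)) : H) : ℂ) := h2
      _ ≤ ‖(inner ℂ ((S m : H)) ((S (m+2)) : H) : ℂ)‖ := RCLike.re_le_norm _
      _ ≤ a m * a (m+2) := norm_inner_le_norm _ _
  set C : ℝ := ∑ i ∈ c.support, ‖c i‖ * B ^ i with hCdef
  have hC : 0 ≤ C := Finset.sum_nonneg fun i _ => by positivity
  have growth : ∀ m : ℕ, 1 ≤ m → a m ≤ C * B ^ m := by
    intro m hm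
    rw [ha]
    calc ‖(S m : H)‖ ≤ ∑ i ∈ c.support, ‖c i • u (i + m)‖ := by
          rw [hScoe]; exact norm_sum_le _ _
      _ ≤ ∑ i ∈ c.support, ‖c i‖ * B ^ (i + m) := by
          apply Finset.sum_le_sum
          intro i _
          rw [norm_smul]
          exact mul_le_mul_of_nonneg_left (hbdd (i+m) (by omega)) (norm_nonneg _)
      _ = C * B ^ m := by
          rw [hCdef, Finset.sum_mul]
          congr 1; ext i; rw [pow_add]; ring
  have Qstep : ∀ m : ℕ, a (m + 1) * a 1 ≤ a 0 * a (m + 2) := by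
    intro m
    induction m with
    | zero => simpa [sq] using loggap 0
    | succ k ih =>
      rcases eq_or_lt_of_le (ha0 (k + 2)) with hz | hpos
      · nlinarith [ha0 0, ha0 (k+3), ha0 1]
      · nlinarith [loggap (k + 1), ha0 1, ha0 0, ha0 (k+3)]
  have P : ∀ N : ℕ, a 1 ^ (N + 1) ≤ a 0 ^ N * a (N + 1) := by
    intro N
    induction N with
    | zero => simp
    | succ k ih =>
      calc a 1 ^ (k + 2) = a 1 ^ (k + 1) * a 1 := by ring
        _ ≤ (a 0 ^ k * a (k + 1)) * a 1 := mul_le_mul_of_nonneg_right ih (ha0 1)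
        _ = a 0 ^ k * (a (k + 1) * a 1) := by ring
        _ ≤ a 0 ^ k * (a 0 * a (k + 2)) := by
            refine mul_le_mul_of_nonneg_left (Qstep k) (by positivity)
        _ = a 0 ^ (k + 1) * a (k + 2) := by ring
  have final : a 1 ≤ B * a 0 := by
    rcases eq_or_lt_of_le (ha0 0) with h0 | h0
    · have := P 1
      rw [← h0] at this
      simp at this
      have h1 : a 1 = 0 := by nlinarith [ha0 1, this, ha0 2]
      rw [h1, ← h0]; simp
    · by_contra hlt
      push_neg at hlt
      set r : ℝ := a 1 / (B * a 0) with hr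
      have hBa : 0 < B * a 0 := by positivity
      have hr1 : 1 < r := (one_lt_div hBa).2 hlt
      obtain ⟨n, hn⟩ := pow_unbounded_of_one_lt (C / a 0) hr1
      have hle : a 1 ^ (n + 1) ≤ (B * a 0) ^ (n + 1) * (C / a 0) := by
        calc a 1 ^ (n + 1) ≤ a 0 ^ n * a (n + 1) := P n
          _ ≤ a 0 ^ n * (C * B ^ (n + 1)) := by
              refine mul_le_mul_of_nonneg_left (growth (n+1) (by omega)) (by positivity)
          _ = (B * a 0) ^ (n + 1) * (C / a 0) := by
              field_simp
              ring
      have hlt2 : (B * a 0) ^ (n + 1) * (C / a 0) < (B * a 0) ^ (n + 1) * r ^ (n + 1) := by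
        apply mul_lt_mul_of_pos_left _ (by positivity)
        calc C / a 0 < r ^ n := hn
          _ ≤ r ^ (n + 1) := pow_le_pow_right₀ (le_of_lt hr1) (by omega)
      have heq2 : (B * a 0) ^ (n + 1) * r ^ (n + 1) = a 1 ^ (n + 1) := by
        rw [← mul_pow, hr]
        field_simp
      nlinarith [hle, hlt2, heq2]
  -- conclude
  have hd : h ∈ A.domain := hS0 ▸ (S 0).2
  have hS0' : S 0 = ⟨h, hd⟩ := Subtype.ext hS0
  have hval : A ⟨h, hd⟩ = ((S 1 : H)) := by rw [← hS0', hSd 0]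
  refine ⟨hd, ?_, ?_⟩
  · rw [hval, hScoe]
    exact Submodule.sum_mem _ fun i _ =>
      Submodule.smul_mem _ _ (Submodule.subset_span ⟨i + 1, rfl⟩)
  · rw [hval]
    calc ‖(S 1 : H)‖ = a 1 := rfl
      _ ≤ B * a 0 := final
      _ = B * ‖h‖ := by rw [ha]; simp [hS0]

end Aux


set_option maxHeartbeats 2000000 in
lemma part1 (A : H →ₗ.[ℂ] H) (hsa : IsSelfAdjoint A)
    (g : H) (u : ℕ → H) (hu : IsOrbit A g u)
    (B : ℝ) (hB : 0 < B) (hbdd : ∀ n : ℕ, 1 ≤ n → ‖u n‖ ≤ B ^ n) :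
    krylovIntersection A u = ({0} : Set H) := by
  have hsymm := symm_of_sa A hsa
  have hdom : ∀ n, u n ∈ A.domain := fun n => (hu.2 n).choose
  have hstep : ∀ n (hn : u n ∈ A.domain), A ⟨u n, hn⟩ = u (n + 1) :=
    fun n hn => (hu.2 n).choose_spec
  have key := key_bound A hsymm u hdom hstep B hB hbdd
  set Ssub : Submodule ℂ H := Submodule.span ℂ (Set.range u) with hSsub
  set M : Submodule ℂ H := Ssub.topologicalClosure with hM
  have hSle : Ssub ≤ A.domain := fun x hx => (key x hx).choose
  set l : ↥Ssub →ₗ[ℂ] H := A.toFun ∘ₗ Submodule.inclusion hSle with hl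
  have hl_eq : ∀ (s : ↥Ssub) (hs : (s : H) ∈ A.domain), l s = A ⟨(s : H), hs⟩ :=
    fun s hs => rfl
  have hl_bound : ∀ s : ↥Ssub, ‖l s‖ ≤ B * ‖s‖ := by
    intro s
    obtain ⟨hd, _, hle⟩ := key (s : H) s.2
    exact hle
  have hl_mem : ∀ s : ↥Ssub, l s ∈ Ssub := by
    intro s
    obtain ⟨hd, hmem, _⟩ := key (s : H) s.2
    exact hmem
  set T0 : ↥Ssub →L[ℂ] H := l.mkContinuous B hl_bound with hT0
  have hT0app : ∀ s, T0 s = l s := fun s => rfl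
  set eincl : ↥Ssub →L[ℂ] ↥M :=
    (Submodule.inclusion Ssub.le_topologicalClosure).mkContinuous 1
      (fun x => by simpa using le_refl ‖(x : H)‖) with heincl
  have heapp : ∀ s : ↥Ssub, ((eincl s : H)) = (s : H) := fun s => rfl
  have h_e : IsUniformInducing eincl :=
    (AddMonoidHomClass.isometry_of_norm eincl (fun x => rfl)).isUniformInducing
  have h_dense : DenseRange eincl := by
    intro m
    rw [Metric.mem_closure_iff]
    intro ε hε
    have hm : (m : H) ∈ closure (Ssub : Set H) := by
      rw [← Submodule.topologicalClosure_coe]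
      exact m.2
    rcases Metric.mem_closure_iff.1 hm ε hε with ⟨s, hsS, hds⟩
    exact ⟨eincl ⟨s, hsS⟩, ⟨⟨s, hsS⟩, rfl⟩, by rw [Subtype.dist_eq]; exact hds⟩
  set Tbar : ↥M →L[ℂ] H := T0.extend eincl with hTbar
  have hTbar_e : ∀ s, Tbar (eincl s) = T0 s :=
    fun s => ContinuousLinearMap.extend_eq T0 h_dense h_e s
  have hMclosed : IsClosed (M : Set H) := Ssub.isClosed_topologicalClosure
  have hTmem : ∀ m : ↥M, Tbar m ∈ M := by
    intro m
    refine h_dense.induction_on m ?_ ?_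
    · exact hMclosed.preimage Tbar.continuous
    · intro s
      rw [hTbar_e s, hT0app]
      exact Ssub.le_topologicalClosure (hl_mem s)
  set T : ↥M →L[ℂ] ↥M := Tbar.codRestrict M hTmem with hT
  have hTapp : ∀ m : ↥M, ((T m : H)) = Tbar m := fun m => rfl
  have hTe : ∀ s : ↥Ssub, ((T (eincl s) : H)) = l s := by
    intro s; rw [hTapp, hTbar_e, hT0app]
  have hTsymm : ∀ x y : ↥M,
      (inner ℂ ((T x : H)) ((y : H)) : ℂ) = inner ℂ ((x : H)) ((T y : H)) := by
    have hcl : IsClosed {q : ↥M × ↥M |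
        (inner ℂ ((T q.1 : H)) ((q.2 : H)) : ℂ) = inner ℂ ((q.1 : H)) ((T q.2 : H))} := by
      apply isClosed_eq
      · exact Continuous.inner
          (continuous_subtype_val.comp (T.continuous.comp continuous_fst))
          (continuous_subtype_val.comp continuous_snd)
      · exact Continuous.inner
          (continuous_subtype_val.comp continuous_fst)
          (continuous_subtype_val.comp (T.continuous.comp continuous_snd))
    intro x y
    refine DenseRange.induction_on₂ h_dense hcl ?_ x y
    intro a b
    rw [hTe a, hTe b, heapp a, heapp b, hl_eq a (hSle a.2), hl_eq b (hSle b.2)]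
    exact hsymm ⟨(a : H), hSle a.2⟩ ⟨(b : H), hSle b.2⟩
  apply Set.Subset.antisymm
  · -- hard inclusion
    rintro w ⟨hwK, x, hx, hxperp, hxw⟩
    obtain ⟨hx', hperp⟩ := hxperp
    have hwM : w ∈ M := by
      rw [hM, ← SetLike.mem_coe, Submodule.topologicalClosure_coe]
      exact hwK
    set what : ↥M := ⟨w, hwM⟩ with hwhat
    -- the orthogonality relation against (1 + A²) K
    have hortho : ∀ s : ↥Ssub,
        (inner ℂ w ((s : H)) : ℂ) + inner ℂ w (l ⟨l s, hl_mem s⟩) = 0 := by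
      intro s
      have hzd : (s : H) ∈ A.domain := hSle s.2
      have h1 : (inner ℂ w ((s : H)) : ℂ) = inner ℂ x (l s) := by
        rw [← hxw, hl_eq s hzd]
        exact hsymm ⟨x, hx⟩ ⟨(s : H), hzd⟩
      have h2 : (inner ℂ x (l s) : ℂ) + inner ℂ w (l ⟨l s, hl_mem s⟩) = 0 := by
        have hlmem : l s ∈ krylov u := hl_mem s
        have hld : l s ∈ A.domain := hSle (hl_mem s)
        have := hperp (l s) hlmem hld
        rw [← hxw]
        exact this
      rw [h1]
      exact h2
    have hper : ∀ m : ↥M, (inner ℂ ((m : H) : H) w : ℂ) + inner ℂ ((T (T m) : H)) w = 0 := by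
      intro m
      refine h_dense.induction_on m ?_ ?_
      · apply isClosed_eq
        · exact Continuous.add
            (Continuous.inner continuous_subtype_val continuous_const)
            (Continuous.inner
              (continuous_subtype_val.comp (T.continuous.comp T.continuous))
              continuous_const)
        · exact continuous_const
      · intro s
        have hTTe : ((T (T (eincl s)) : H)) = l ⟨l s, hl_mem s⟩ := by
          have h1 : T (eincl s) = eincl ⟨l s, hl_mem s⟩ := by
            apply Subtype.ext
            rw [hTe s, heapp]
          rw [h1, hTe]
        rw [hTTe, heapp]
        have := hortho s
        calc (inner ℂ ((s : H)) w : ℂ) + inner ℂ (l ⟨l s, hl_mem s⟩) w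
            = starRingEnd ℂ ((inner ℂ w ((s : H)) : ℂ) + inner ℂ w (l ⟨l s, hl_mem s⟩)) := by
              rw [map_add, inner_conj_symm, inner_conj_symm]
          _ = 0 := by rw [this, map_zero]
    -- w is orthogonal to the range of 1 + T²
    set Sop : ↥M →L[ℂ] ↥M := ContinuousLinearMap.id ℂ ↥M + T.comp T with hSop
    have hSopapp : ∀ m : ↥M, Sop m = m + T (T m) := fun m => rfl
    have hcoSop : ∀ m : ↥M, ((Sop m : H)) = (m : H) + ((T (T m) : H)) := by
      intro m
      rw [hSopapp]
      rfl
    have hperM : what ∈ (LinearMap.range (Sop : ↥M →ₗ[ℂ] ↥M))ᗮ := by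
      rw [Submodule.mem_orthogonal]
      rintro v ⟨m, rfl⟩
      rw [Submodule.coe_inner]
      show (inner ℂ ((Sop m : H)) w : ℂ) = 0
      rw [hcoSop, inner_add_left]
      exact hper m
    have hbot : (LinearMap.range (Sop : ↥M →ₗ[ℂ] ↥M))ᗮ = ⊥ := by
      rw [Submodule.eq_bot_iff]
      intro y hy
      have h0 : (inner ℂ (Sop y) y : ℂ) = 0 := hy (Sop y) ⟨y, rfl⟩
      rw [Submodule.coe_inner, hcoSop, inner_add_left, hTsymm (T y) y] at h0
      have h1 : RCLike.re (inner ℂ ((y : H)) ((y : H)) : ℂ) = ‖(y : H)‖ ^ 2 :=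
        inner_self_eq_norm_sq _
      have h2 : RCLike.re (inner ℂ ((T y : H)) ((T y : H)) : ℂ) = ‖(T y : H)‖ ^ 2 :=
        inner_self_eq_norm_sq _
      have hy0 : ‖(y : H)‖ ^ 2 + ‖(T y : H)‖ ^ 2 = 0 := by
        have := congrArg RCLike.re h0
        rwa [map_add, h1, h2, map_zero] at this
      have : ‖(y : H)‖ = 0 := by nlinarith [norm_nonneg ((y : H)), norm_nonneg ((T y : H))]
      exact Subtype.ext (norm_eq_zero.1 this)
    rw [hbot, Submodule.mem_bot] at hperM
    have hw0 : w = 0 := congrArg Subtype.val hperM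
    simp [hw0]
  · -- {0} ⊆ I
    intro w hw
    rw [Set.mem_singleton_iff] at hw
    subst hw
    constructor
    · exact subset_closure (Submodule.zero_mem _)
    · refine ⟨0, A.domain.zero_mem, ⟨A.domain.zero_mem, ?_⟩, ?_⟩
      · intro y hy hyd
        have hz : A ⟨0, A.domain.zero_mem⟩ = 0 := by
          have h0 : (⟨0, A.domain.zero_mem⟩ : A.domain) = 0 := rfl
          rw [h0]
          exact map_zero A.toFun
        rw [hz]
        simp
      · have h0 : (⟨0, A.domain.zero_mem⟩ : A.domain) = 0 := rfl
        rw [h0]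
        exact map_zero A.toFun


set_option maxHeartbeats 2000000 in
set_option synthInstance.maxHeartbeats 1000000 in
lemma part2 (A : H →ₗ.[ℂ] H) (hsa : IsSelfAdjoint A)
    (g : H) (u : ℕ → H) (hu : IsOrbit A g u)
    (B : ℝ) (hB : 0 < B) (hbdd : ∀ n : ℕ, 1 ≤ n → ‖u n‖ ≤ B ^ n)
    (hI : krylovIntersection A u = ({0} : Set H)) :
    (∃ x, ∃ hx : x ∈ A.domain, A ⟨x, hx⟩ = g) →
      ∃ f, ∃ hf : f ∈ A.domain, f ∈ graphClosure A (krylov u) ∧ A ⟨f, hf⟩ = g := by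
  rintro ⟨x, hx, hxg⟩
  have hsymm := symm_of_sa A hsa
  have hgraph := graph_closed_of_sa A hsa
  have hdom : ∀ n, u n ∈ A.domain := fun n => (hu.2 n).choose
  have hstep : ∀ n (hn : u n ∈ A.domain), A ⟨u n, hn⟩ = u (n + 1) :=
    fun n hn => (hu.2 n).choose_spec
  have key := key_bound A hsymm u hdom hstep B hB hbdd
  set Ssub : Submodule ℂ H := Submodule.span ℂ (Set.range u) with hSsub
  set Γ : ↥A.domain →ₗ[ℂ] WithLp 2 (H × H) :=
    (WithLp.linearEquiv 2 ℂ (H × H)).symm.toLinearMap ∘ₗ (A.domain.subtype.prod A.toFun)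
    with hΓ
  have hGnorm : ∀ (z : H) (hz : z ∈ A.domain), gnorm A hz = ‖Γ ⟨z, hz⟩‖ := by
    intro z hz
    rw [gnorm, WithLp.prod_norm_eq_of_L2]
    rfl
  have hGinner : ∀ z w' : ↥A.domain,
      (inner ℂ (Γ z) (Γ w') : ℂ) = inner ℂ (z : H) (w' : H) + inner ℂ (A z) (A w') := by
    intro z w'
    rw [WithLp.prod_inner_apply]
    rfl
  -- the range of Γ (the graph of A, seen in the L² product) is closed
  have hrange_closed :
      IsClosed ((LinearMap.range Γ : Submodule ℂ (WithLp 2 (H × H))) : Set (WithLp 2 (H × H))) := by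
    have heq : ((LinearMap.range Γ : Submodule ℂ (WithLp 2 (H × H))) : Set (WithLp 2 (H × H)))
        = (WithLp.equiv 2 (H × H)) ⁻¹' (A.graph : Set (H × H)) := by
      ext z
      constructor
      · rintro ⟨m, rfl⟩
        exact A.mem_graph m
      · intro hz
        rw [Set.mem_preimage, SetLike.mem_coe, LinearPMap.mem_graph_iff] at hz
        obtain ⟨m, hm1, hm2⟩ := hz
        refine ⟨m, ?_⟩
        have hpe : ((m : H), A m) = WithLp.equiv 2 (H × H) z := Prod.ext hm1 hm2
        show (WithLp.equiv 2 (H × H)).symm ((m : H), A m) = z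
        rw [hpe]
        exact (WithLp.equiv 2 (H × H)).symm_apply_apply z
    rw [heq]
    exact hgraph.preimage (WithLp.prod_continuous_ofLp 2 H H)
  -- the Krylov space inside the graph space
  set vdom : ℕ → ↥A.domain := fun n => ⟨u n, hdom n⟩ with hvdom
  set Msub : Submodule ℂ ↥A.domain := Submodule.span ℂ (Set.range vdom) with hMsub
  set KV0 : Submodule ℂ (WithLp 2 (H × H)) := Submodule.map Γ Msub with hKV0
  set KV : Submodule ℂ (WithLp 2 (H × H)) := KV0.topologicalClosure with hKV
  have hMsub_coe : Submodule.map A.domain.subtype Msub = Ssub := by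
    rw [hMsub, Submodule.map_span, hSsub]
    congr 1
    rw [← Set.range_comp]
    rfl
  have hcoe_mem : ∀ m : ↥A.domain, m ∈ Msub → (m : H) ∈ Ssub := by
    intro m hm
    rw [← hMsub_coe]
    exact Submodule.mem_map_of_mem hm
  have hmem_lift : ∀ (y : H), y ∈ Ssub → ∀ hyd : y ∈ A.domain, (⟨y, hyd⟩ : ↥A.domain) ∈ Msub := by
    intro y hy hyd
    rw [← hMsub_coe] at hy
    obtain ⟨m, hm, hmeq⟩ := hy
    have : (⟨y, hyd⟩ : ↥A.domain) = m := Subtype.ext hmeq.symm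
    rw [this]
    exact hm
  haveI : CompleteSpace ↥KV := KV0.isClosed_topologicalClosure.completeSpace_coe
  have hKV0_range : KV0 ≤ LinearMap.range Γ := by
    rintro z ⟨m, _, rfl⟩
    exact ⟨m, rfl⟩
  have hKV_range : KV ≤ LinearMap.range Γ :=
    Submodule.topologicalClosure_minimal KV0 hKV0_range hrange_closed
  -- decompose Γ x
  set ξ : WithLp 2 (H × H) := Γ ⟨x, hx⟩ with hξ
  set fE : WithLp 2 (H × H) := (KV.orthogonalProjectionOnto ξ : WithLp 2 (H × H)) with hfE
  have hfEKV : fE ∈ KV := (KV.orthogonalProjectionOnto ξ).2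
  obtain ⟨xf, hxfΓ⟩ := hKV_range hfEKV
  set f : H := (xf : H) with hf_def
  have hf : f ∈ A.domain := xf.2
  have hxf_eq : (⟨f, hf⟩ : ↥A.domain) = xf := Subtype.ext rfl
  set v : H := x - f with hv_def
  have hv : v ∈ A.domain := A.domain.sub_mem hx hf
  have hvsub : (⟨v, hv⟩ : ↥A.domain) = ⟨x, hx⟩ - xf := Subtype.ext rfl
  have hΓv : Γ ⟨v, hv⟩ = ξ - fE := by
    rw [hvsub, map_sub, hxfΓ]
  have hη : ξ - fE ∈ KVᗮ := Submodule.sub_starProjection_mem_orthogonal (K := KV) ξ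
  -- v ∈ perpV
  have hvperp : v ∈ perpV A (krylov u) := by
    refine ⟨hv, ?_⟩
    intro y hy hyd
    have hyM : (⟨y, hyd⟩ : ↥A.domain) ∈ Msub := hmem_lift y hy hyd
    have hyKV : Γ ⟨y, hyd⟩ ∈ KV :=
      KV0.le_topologicalClosure (Submodule.mem_map_of_mem hyM)
    have h0 : (inner ℂ (Γ ⟨v, hv⟩) (Γ ⟨y, hyd⟩) : ℂ) = 0 := by
      rw [hΓv]
      rw [← inner_conj_symm]
      rw [hη (Γ ⟨y, hyd⟩) hyKV]
      simp
    rw [hGinner] at h0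
    exact h0
  -- approximating sequence for f in graph norm
  have hfE_closure : fE ∈ closure (KV0 : Set (WithLp 2 (H × H))) := by
    rw [← Submodule.topologicalClosure_coe]
    exact hfEKV
  obtain ⟨q, hqKV0, hqlim⟩ := mem_closure_iff_seq_limit.1 hfE_closure
  have hqchoice : ∀ k, ∃ m : ↥A.domain, m ∈ Msub ∧ Γ m = q k := fun k => hqKV0 k
  choose mk hmkM hmkΓ using hqchoice
  set p : ℕ → H := fun k => (mk k : H) with hp_def
  have hpK : ∀ k, p k ∈ krylov u := fun k => hcoe_mem (mk k) (hmkM k)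
  have hpdom : ∀ k, p k ∈ A.domain := fun k => (mk k).2
  -- graph norm convergence
  have htend : Tendsto (fun k => gnorm A (A.domain.sub_mem (hpdom k) hf)) atTop (𝓝 0) := by
    have h1 : ∀ k, gnorm A (A.domain.sub_mem (hpdom k) hf) = ‖q k - fE‖ := by
      intro k
      rw [hGnorm (p k - f) (A.domain.sub_mem (hpdom k) hf)]
      have : (⟨p k - f, A.domain.sub_mem (hpdom k) hf⟩ : ↥A.domain) = mk k - xf :=
        Subtype.ext rfl
      rw [this, map_sub, hmkΓ, hxfΓ]
    simp only [h1]
    exact tendsto_iff_norm_sub_tendsto_zero.mp hqlim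
  -- A v lies in the Krylov intersection
  have hAveq : A ⟨x, hx⟩ = A ⟨f, hf⟩ + A ⟨v, hv⟩ := by
    have h2 : (⟨x, hx⟩ : ↥A.domain) = ⟨f, hf⟩ + ⟨v, hv⟩ := Subtype.ext (by simp [hv_def])
    show A.toFun ⟨x, hx⟩ = A.toFun ⟨f, hf⟩ + A.toFun ⟨v, hv⟩
    rw [h2, map_add]
  have hAf_closure : A ⟨f, hf⟩ ∈ Ssub.topologicalClosure := by
    -- A f is the limit of A p k, each in Ssub
    have hsnd_cont : Continuous fun z : WithLp 2 (H × H) => (WithLp.equiv 2 (H × H) z).2 :=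
      continuous_snd.comp (WithLp.prod_continuous_ofLp 2 H H)
    have hlim2 : Tendsto (fun k => (WithLp.equiv 2 (H × H) (q k)).2) atTop
        (𝓝 ((WithLp.equiv 2 (H × H) fE).2)) := (hsnd_cont.tendsto fE).comp hqlim
    have hqsnd : ∀ k, (WithLp.equiv 2 (H × H) (q k)).2 = A (mk k) := by
      intro k
      rw [← hmkΓ k]
      rfl
    have hfsnd : (WithLp.equiv 2 (H × H) fE).2 = A ⟨f, hf⟩ := by
      rw [← hxfΓ, ← hxf_eq]
      rfl
    rw [← SetLike.mem_coe, Submodule.topologicalClosure_coe]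
    apply mem_closure_of_tendsto (hfsnd ▸ hlim2)
    filter_upwards with k
    rw [hqsnd k]
    obtain ⟨hd, hmem, _⟩ := key (p k) (hpK k)
    exact hmem
  have hAv_mem : A ⟨v, hv⟩ ∈ krylovIntersection A u := by
    constructor
    · have hg_mem : g ∈ Ssub := by
        rw [hSsub]
        exact hu.1 ▸ Submodule.subset_span ⟨0, rfl⟩
      have : A ⟨v, hv⟩ = g - A ⟨f, hf⟩ := by
        rw [← hxg, hAveq, add_sub_cancel_left]
      rw [this]
      have hmem : g - A ⟨f, hf⟩ ∈ Ssub.topologicalClosure :=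
        Submodule.sub_mem _ (Ssub.le_topologicalClosure hg_mem) hAf_closure
      rw [← SetLike.mem_coe, Submodule.topologicalClosure_coe] at hmem
      exact hmem
    · exact ⟨v, hv, hvperp, rfl⟩
  have hAv0 : A ⟨v, hv⟩ = 0 := by
    rw [hI] at hAv_mem
    exact hAv_mem
  refine ⟨f, hf, ⟨hf, p, hpK, hpdom, htend⟩, ?_⟩
  rw [← hxg, hAveq, hAv0, add_zero]

theorem statement15 (A : H →ₗ.[ℂ] H) (hsa : IsSelfAdjoint A)
    (g : H) (u : ℕ → H) (hu : IsOrbit A g u)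
    (B : ℝ) (hB : 0 < B) (hbdd : ∀ n : ℕ, 1 ≤ n → ‖u n‖ ≤ B ^ n) :
    krylovIntersection A u = ({0} : Set H) ∧
      ((∃ x, ∃ hx : x ∈ A.domain, A ⟨x, hx⟩ = g) →
        ∃ f, ∃ hf : f ∈ A.domain, f ∈ graphClosure A (krylov u) ∧ A ⟨f, hf⟩ = g) := by
  have h1 := part1 A hsa g u hu B hB hbdd
  exact ⟨h1, part2 A hsa g u hu B hB hbdd h1⟩

end KrylovPaper
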